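/- Let A be an (n-1)×n complex matrix and U a Hermitian n×n matrix with A U A* = λ I_{n-1} for some real λ > 0. If U does not have rank n (i.e., U is singular), then U has exactly n-1 positive eigenvalues (counted with multiplicity) and one zero eigenvalue. -/

import Mathlib

open Matrix

lemma aux_exists_ne_zero_mulVec_eq_zero {m k : ℕ} (hk : k < m)
    {ι : Type*} [Fintype ι] (hcard : Fintype.card ι = k)
    (M : Matrix ι (Fin m) ℂ) : ∃ x : Fin m → ℂ, x ≠ 0 ∧ M *ᵥ x = 0 := by
  have hninj : ¬ Function.Injective M.mulVecLin := by
    intro hinj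
    have h1 := LinearMap.finrank_le_finrank_of_injective hinj
    rw [Module.finrank_fintype_fun_eq_card, Module.finrank_fintype_fun_eq_card,
      Fintype.card_fin, hcard] at h1
    omega
  rw [← LinearMap.ker_eq_bot] at hninj
  obtain ⟨x, hx1, hx2⟩ := Submodule.exists_mem_ne_zero_of_ne_bot hninj
  exact ⟨x, hx2, hx1⟩

lemma aux_key {n : ℕ} (hn : 2 ≤ n)
    (B : Matrix (Fin (n-1)) (Fin n) ℂ) (mu : Fin n → ℝ) (lam : ℝ) (hlam : 0 < lam)
    (h : B * diagonal (fun k => (mu k : ℂ)) * Bᴴ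
        = (lam : ℂ) • (1 : Matrix (Fin (n-1)) (Fin (n-1)) ℂ))
    (i j : Fin n) (hij : i ≠ j) (hi : mu i ≤ 0) (hj : mu j ≤ 0) : False := by
  classical
  have hcard : Fintype.card {k : Fin n // ¬ (k = i ∨ k = j)} = n - 2 := by
    rw [Fintype.card_subtype_compl]
    congr 1
    · simp
    · rw [Fintype.card_subtype]
      rw [show (Finset.filter (fun k => k = i ∨ k = j) Finset.univ)
          = {i, j} by ext k; simp [or_comm]]
      rw [Finset.card_insert_of_notMem (by simp [hij]), Finset.card_singleton]
  have hk : n - 2 < n - 1 := by omega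
  obtain ⟨x, hx0, hxker⟩ := aux_exists_ne_zero_mulVec_eq_zero hk hcard
    ((Bᴴ).submatrix Subtype.val id)
  set y : Fin n → ℂ := Bᴴ *ᵥ x with hy
  have hysupp : ∀ k : Fin n, k ≠ i → k ≠ j → y k = 0 := by
    intro k hki hkj
    have := congrFun hxker ⟨k, by tauto⟩
    simpa [hy, Matrix.submatrix_mulVec_equiv, Matrix.mulVec, dotProduct] using this
  have hq : star y ⬝ᵥ (diagonal (fun k => (mu k : ℂ)) *ᵥ y)
      = star x ⬝ᵥ (((lam : ℂ) • (1 : Matrix (Fin (n-1)) (Fin (n-1)) ℂ)) *ᵥ x) := by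
    rw [← h]
    rw [show star y = star x ᵥ* B by
      rw [hy, Matrix.star_mulVec, Matrix.conjTranspose_conjTranspose]]
    rw [hy, ← Matrix.mulVec_mulVec, ← Matrix.mulVec_mulVec]
    exact (Matrix.dotProduct_mulVec (star x) B _).symm
  have hL : star y ⬝ᵥ (diagonal (fun k => (mu k : ℂ)) *ᵥ y)
      = ((∑ k, mu k * Complex.normSq (y k) : ℝ) : ℂ) := by
    rw [Complex.ofReal_sum]
    simp only [dotProduct, Matrix.mulVec_diagonal, Pi.star_apply]
    refine Finset.sum_congr rfl fun k _ => ?_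
    rw [Complex.ofReal_mul, Complex.normSq_eq_conj_mul_self]
    simp only [RCLike.star_def]
    ring
  have hR : star x ⬝ᵥ (((lam : ℂ) • (1 : Matrix (Fin (n-1)) (Fin (n-1)) ℂ)) *ᵥ x)
      = ((lam * ∑ k, Complex.normSq (x k) : ℝ) : ℂ) := by
    rw [Matrix.smul_mulVec, Matrix.one_mulVec, dotProduct_smul,
      Complex.ofReal_mul, Complex.ofReal_sum]
    rw [smul_eq_mul]
    congr 1
    simp only [dotProduct, Pi.star_apply]
    refine Finset.sum_congr rfl fun k _ => ?_
    rw [Complex.normSq_eq_conj_mul_self]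
    simp [RCLike.star_def]
  rw [hL, hR, Complex.ofReal_inj] at hq
  have hLle : (∑ k, mu k * Complex.normSq (y k)) ≤ 0 := by
    apply Finset.sum_nonpos
    intro k _
    by_cases hki : k = i
    · subst hki; exact mul_nonpos_of_nonpos_of_nonneg hi (Complex.normSq_nonneg _)
    by_cases hkj : k = j
    · subst hkj; exact mul_nonpos_of_nonpos_of_nonneg hj (Complex.normSq_nonneg _)
    · rw [hysupp k hki hkj]; simp
  have hRpos : 0 < lam * ∑ k, Complex.normSq (x k) := by
    apply mul_pos hlam
    obtain ⟨k, hkne⟩ := Function.ne_iff.mp hx0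
    exact Finset.sum_pos' (fun k _ => Complex.normSq_nonneg _)
      ⟨k, Finset.mem_univ k, Complex.normSq_pos.mpr hkne⟩
  linarith

theorem stmt1 (n : ℕ) (hn : 2 ≤ n)
    (A : Matrix (Fin (n-1)) (Fin n) ℂ) (U : Matrix (Fin n) (Fin n) ℂ)
    (hU : U.IsHermitian) (lam : ℝ) (hlam : 0 < lam)
    (h : A * U * Aᴴ = (lam : ℂ) • (1 : Matrix (Fin (n-1)) (Fin (n-1)) ℂ))
    (hrank : U.rank ≠ n) :
    ∃ i : Fin n, hU.eigenvalues i = 0 ∧ ∀ j : Fin n, j ≠ i → 0 < hU.eigenvalues j := by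
  classical
  -- a zero eigenvalue exists
  have hdet : U.det = 0 := by
    by_contra hd
    refine hrank ?_
    rw [Matrix.rank_of_isUnit U (by rwa [Matrix.isUnit_iff_isUnit_det, isUnit_iff_ne_zero]),
      Fintype.card_fin]
  rw [hU.det_eq_prod_eigenvalues] at hdet
  obtain ⟨i, -, hi0c⟩ := Finset.prod_eq_zero_iff.mp hdet
  have hi0 : hU.eigenvalues i = 0 := Complex.ofReal_eq_zero.mp hi0c
  -- B D Bᴴ = lam • 1
  set V : Matrix (Fin n) (Fin n) ℂ := (hU.eigenvectorUnitary : Matrix (Fin n) (Fin n) ℂ)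
    with hV
  have hBDB : (A * V) * diagonal (fun k => ((hU.eigenvalues k : ℝ) : ℂ))
      * (A * V)ᴴ = (lam : ℂ) • 1 := by
    have hs := hU.spectral_theorem
    rw [Unitary.conjStarAlgAut_apply, Matrix.star_eq_conjTranspose] at hs
    rw [← h]
    conv_rhs => rw [hs]
    rw [Matrix.conjTranspose_mul]
    show A * V * diagonal (RCLike.ofReal ∘ hU.eigenvalues) * (Vᴴ * Aᴴ) = _
    simp only [Matrix.mul_assoc]
    rfl
  refine ⟨i, hi0, fun j hji => ?_⟩
  by_contra hle
  push_neg at hle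
  exact aux_key hn (A * V) hU.eigenvalues lam hlam hBDB j i hji hle (le_of_eq hi0)
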